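/- An infinite string α over an alphabet Σ partitioned into left brackets, right brackets, and neutral symbols is well-nested (i.e., a concatenation of infinitely many elementary well-nested finite strings) if and only if α has infinitely many well-nested finite prefixes. -/

import Mathlib

/-- Classification of alphabet symbols: left bracket, right bracket, or neutral. -/
inductive Kind : Type
  | left | right | neutral
deriving DecidableEq

/-- The set of well-nested finite strings over an alphabet `A` classified by `k`. -/
inductive WN {A : Type} (k : A → Kind) : List A → Prop
  | nil : WN k []
  | neutral (c : A) : k c = Kind.neutral → WN k [c]
  | append {u v : List A} : WN k u → WN k v → WN k (u ++ v)
  | enclose (l r : A) {u : List A} : k l = Kind.left → k r = Kind.right →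
      WN k u → WN k (l :: u ++ [r])

/-- Elementary well-nested strings: a neutral symbol, or a well-nested string in brackets. -/
def EWN {A : Type} (k : A → Kind) : Set (List A) :=
  {w | (∃ c, k c = Kind.neutral ∧ w = [c]) ∨
       ∃ l r u, k l = Kind.left ∧ k r = Kind.right ∧ WN k u ∧ w = l :: u ++ [r]}

/-- `u` is a prefix of the infinite string `α`. -/
def FunPrefix {A : Type} (u : List A) (α : ℕ → A) : Prop :=
  ∀ i : ℕ, ∀ h : i < u.length, u.get ⟨i, h⟩ = α i

/-- The infinite string `α` is the infinite concatenation of the finite strings `x 0, x 1, …`. -/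
def Concats {A : Type} (x : ℕ → List A) (α : ℕ → A) : Prop :=
  ∀ n : ℕ, FunPrefix ((List.range n).flatMap x) α

/-- An infinite string is well-nested if it is an infinite concatenation of
elementary well-nested finite strings. -/
def WNomega {A : Type} (k : A → Kind) (α : ℕ → A) : Prop :=
  ∃ x : ℕ → List A, (∀ i, x i ∈ EWN k) ∧ Concats x α

/-!
Give left brackets weight `1`, right brackets `-1` and neutral letters `0`. A finite string is
well-nested iff it is a Dyck word: its total weight is `0` and no prefix has negative weight.
If `α = x₀x₁⋯` with elementary well-nested `xᵢ`, the prefixes `x₀⋯xₙ` are well-nested and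
strictly increasing in length. Conversely, infinitely many well-nested prefixes force the height
(weight of the length-`n` prefix) to be nonnegative everywhere and zero infinitely often; cutting
`α` at consecutive zeros of the height gives Dyck factors with positive height strictly inside,
and such a factor is a neutral letter or a Dyck word between a matching pair of brackets.
-/

def Kind.weight : Kind → ℤ
  | .left => 1
  | .right => -1
  | .neutral => 0

namespace Kind

@[simp] theorem weight_left : Kind.left.weight = 1 := rfl
@[simp] theorem weight_right : Kind.right.weight = -1 := rfl
@[simp] theorem weight_neutral : Kind.neutral.weight = 0 := rfl

theorem neg_one_le_weight (κ : Kind) : -1 ≤ κ.weight := by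
  cases κ <;> decide

theorem weight_eq_neg_one_iff {κ : Kind} : κ.weight = -1 ↔ κ = .right := by
  cases κ <;> decide

end Kind

section Dyck

variable {A : Type} (k : A → Kind)

def balance (w : List A) : ℤ := (w.map fun a => (k a).weight).sum

@[simp] theorem balance_nil : balance k [] = 0 := rfl

@[simp] theorem balance_cons (a : A) (w : List A) :
    balance k (a :: w) = (k a).weight + balance k w := by
  simp [balance]

@[simp] theorem balance_append (u v : List A) :
    balance k (u ++ v) = balance k u + balance k v := by
  simp [balance]

theorem neg_one_le_balance_take_singleton (a : A) (j : ℕ) : -1 ≤ balance k ([a].take j) := by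
  cases j <;> simp [(k a).neg_one_le_weight]

def IsDyck (w : List A) : Prop :=
  balance k w = 0 ∧ ∀ j, 0 ≤ balance k (w.take j)

variable {k}

theorem IsDyck.nil : IsDyck k [] := ⟨rfl, fun _ => by simp⟩

theorem IsDyck.append {u v : List A} (hu : IsDyck k u) (hv : IsDyck k v) :
    IsDyck k (u ++ v) := by
  refine ⟨by simp [hu.1, hv.1], fun j => ?_⟩
  rw [List.take_append, balance_append]
  exact add_nonneg (hu.2 _) (hv.2 _)

theorem IsDyck.enclose {l r : A} {u : List A} (hl : k l = .left) (hr : k r = .right)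
    (hu : IsDyck k u) : IsDyck k (l :: u ++ [r]) := by
  refine ⟨by simp [hl, hr, hu.1], fun j => ?_⟩
  cases j with
  | zero => simp
  | succ j =>
    rw [List.cons_append, List.take_succ_cons, balance_cons, List.take_append, balance_append,
      hl, Kind.weight_left]
    have := neg_one_le_balance_take_singleton k r (j - u.length)
    have := hu.2 j
    omega

theorem WN.isDyck {w : List A} (hw : WN k w) : IsDyck k w := by
  induction hw with
  | nil => exact .nil
  | neutral c hc => exact ⟨by simp [hc], fun j => by cases j <;> simp [hc]⟩
  | append _ _ ihu ihv => exact ihu.append ihv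
  | enclose l r hl hr _ ih => exact ih.enclose hl hr

theorem IsDyck.take {w : List A} (hw : IsDyck k w) {j : ℕ} (hj : balance k (w.take j) = 0) :
    IsDyck k (w.take j) :=
  ⟨hj, fun i => by rw [List.take_take]; exact hw.2 _⟩

theorem IsDyck.drop {w : List A} (hw : IsDyck k w) {j : ℕ} (hj : balance k (w.take j) = 0) :
    IsDyck k (w.drop j) := by
  refine ⟨?_, fun i => ?_⟩
  · have := hw.1
    rw [← List.take_append_drop j w, balance_append, hj] at this
    simpa using this
  · have := hw.2 (j + i)
    rwa [List.take_add, balance_append, hj, zero_add] at this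

theorem IsDyck.eq_singleton_or_enclose {w : List A} (hw : IsDyck k w) (hne : w ≠ [])
    (hprim : ∀ j, 0 < j → j < w.length → balance k (w.take j) ≠ 0) :
    (∃ c, k c = .neutral ∧ w = [c]) ∨
      ∃ l r u, k l = .left ∧ k r = .right ∧ IsDyck k u ∧ w = l :: u ++ [r] := by
  obtain ⟨a, t, rfl⟩ := List.exists_cons_of_ne_nil hne
  have ha1 := hprim 1
  have ha2 := hw.2 1
  simp only [List.take_succ_cons, List.take_zero, balance_cons, balance_nil, add_zero,
    List.length_cons] at ha1 ha2
  rcases ha : k a with _ | _ | _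
  · rcases List.eq_nil_or_concat' t with rfl | ⟨u, r, rfl⟩
    · simpa [ha] using hw.1
    have hprefix : ∀ i ≤ u.length, 0 ≤ balance k (u.take i) := by
      intro i hi
      have hnonneg := hw.2 (i + 1)
      have hnonzero := hprim (i + 1) (by omega) (by simp; omega)
      rw [List.take_succ_cons, List.take_append_of_le_length hi, balance_cons, ha,
        Kind.weight_left] at hnonneg hnonzero
      omega
    have hbal_u : 0 ≤ balance k u := by simpa using hprefix u.length le_rfl
    have htotal := hw.1
    have hr := (k r).neg_one_le_weight
    simp only [balance_cons, balance_append, ha, Kind.weight_left, balance_nil] at htotal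
    have hr' : (k r).weight = -1 := by omega
    refine .inr ⟨a, r, u, ha, Kind.weight_eq_neg_one_iff.1 hr', ⟨by omega, fun i => ?_⟩, rfl⟩
    rcases le_or_gt i u.length with hi | hi
    · exact hprefix i hi
    · rw [List.take_of_length_le hi.le]; exact hbal_u
  · simp [ha] at ha2
  · rcases t with _ | ⟨b, t⟩
    · exact .inl ⟨a, ha, rfl⟩
    · simp [ha] at ha1

theorem IsDyck.wn {w : List A} (hw : IsDyck k w) : WN k w := by
  induction hlen : w.length using Nat.strong_induction_on generalizing w with
  | _ n ih =>
  subst hlen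
  by_cases hsplit : ∃ j, 0 < j ∧ j < w.length ∧ balance k (w.take j) = 0
  · obtain ⟨j, hj0, hjw, hbal⟩ := hsplit
    rw [← List.take_append_drop j w]
    refine .append (ih _ ?_ (hw.take hbal) rfl) (ih _ ?_ (hw.drop hbal) rfl) <;>
      simp only [List.length_take, List.length_drop] <;> omega
  push Not at hsplit
  rcases eq_or_ne w [] with rfl | hne
  · exact .nil
  rcases hw.eq_singleton_or_enclose hne hsplit with ⟨c, hc, rfl⟩ | ⟨l, r, u, hl, hr, hu, rfl⟩
  · exact .neutral c hc
  · exact .enclose l r hl hr (ih _ (by simp) hu rfl)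

theorem mem_EWN_of_isDyck {w : List A} (hw : IsDyck k w) (hne : w ≠ [])
    (hprim : ∀ j, 0 < j → j < w.length → balance k (w.take j) ≠ 0) : w ∈ EWN k := by
  rcases hw.eq_singleton_or_enclose hne hprim with h | ⟨l, r, u, hl, hr, hu, rfl⟩
  · exact .inl h
  · exact .inr ⟨l, r, u, hl, hr, hu.wn, rfl⟩

theorem wn_of_mem_EWN {w : List A} (hw : w ∈ EWN k) : WN k w := by
  rcases hw with ⟨c, hc, rfl⟩ | ⟨l, r, u, hl, hr, hu, rfl⟩
  · exact .neutral c hc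
  · exact .enclose l r hl hr hu

theorem ne_nil_of_mem_EWN {w : List A} (hw : w ∈ EWN k) : w ≠ [] := by
  rcases hw with ⟨c, -, rfl⟩ | ⟨l, r, u, -, -, -, rfl⟩ <;> simp

theorem WN.flatMap {B : Type} {f : B → List A} {l : List B} (hf : ∀ b ∈ l, WN k (f b)) :
    WN k (l.flatMap f) := by
  induction l with
  | nil => exact .nil
  | cons b l ih =>
    rw [List.flatMap_cons]
    exact .append (hf b (by simp)) (ih fun b' hb' => hf b' (by simp [hb']))

end Dyck

section Omega

variable {A : Type}

theorem FunPrefix.eq_map_range {u : List A} {α : ℕ → A} (h : FunPrefix u α) :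
    u = (List.range u.length).map α :=
  List.ext_get (by simp) fun i hi _ => by simpa using h i hi

theorem funPrefix_map_range (α : ℕ → A) (n : ℕ) : FunPrefix ((List.range n).map α) α := by
  intro i hi
  simp

theorem take_map_range' (α : ℕ → A) (s n j : ℕ) :
    ((List.range' s n).map α).take j = (List.range' s (min j n)).map α := by
  rw [← List.map_take, List.range'_eq_map_range, ← List.map_take, List.take_range,
    List.range'_eq_map_range]

theorem concats_segments (α : ℕ → A) {e : ℕ → ℕ} (he0 : e 0 = 0) (he : Monotone e) :
    Concats (fun i => (List.range' (e i) (e (i + 1) - e i)).map α) α := by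
  suffices h : ∀ n, (List.range n).flatMap
      (fun i => (List.range' (e i) (e (i + 1) - e i)).map α) = (List.range (e n)).map α from
    fun n => h n ▸ funPrefix_map_range α (e n)
  intro n
  induction n with
  | zero => simp [he0]
  | succ n ih =>
    have hcut := List.range'_append_1 (s := 0) (m := e n) (n := e (n + 1) - e n)
    rw [zero_add, Nat.add_sub_cancel' (he n.le_succ)] at hcut
    rw [List.range_succ, List.flatMap_append, ih, List.flatMap_singleton, ← List.map_append,
      List.range_eq_range', List.range_eq_range', hcut]

variable (k : A → Kind) (α : ℕ → A)

def height (n : ℕ) : ℤ := balance k ((List.range n).map α)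

theorem balance_map_range' (s n : ℕ) :
    balance k ((List.range' s n).map α) = height k α (s + n) - height k α s := by
  simp only [height, List.range_eq_range', ← List.range'_append_1, zero_add, List.map_append,
    balance_append]
  ring

variable {k α}

theorem height_nonneg_of_wn {n m : ℕ} (hn : WN k ((List.range n).map α)) (hmn : m ≤ n) :
    0 ≤ height k α m := by
  have := hn.isDyck.2 m
  rwa [List.range_eq_range', take_map_range', min_eq_left hmn, ← List.range_eq_range'] at this

theorem mem_EWN_segment {s d : ℕ} (hd : 0 < d) (hs : height k α s = 0)
    (hsd : height k α (s + d) = 0) (hnonneg : ∀ j ≤ d, 0 ≤ height k α (s + j))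
    (hgap : ∀ j, 0 < j → j < d → height k α (s + j) ≠ 0) :
    (List.range' s d).map α ∈ EWN k := by
  refine mem_EWN_of_isDyck ⟨?_, fun j => ?_⟩ (by simp; omega) fun j hj0 hjd => ?_
  · rw [balance_map_range', hs, hsd, sub_zero]
  · rw [take_map_range', balance_map_range', hs, sub_zero]
    exact hnonneg _ (min_le_right j d)
  · simp only [List.length_map, List.length_range'] at hjd
    rw [take_map_range', min_eq_left hjd.le, balance_map_range', hs, sub_zero]
    exact hgap j hj0 hjd

theorem WNomega.infinite_wn_prefixes (h : WNomega k α) :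
    {n : ℕ | WN k ((List.range n).map α)}.Infinite := by
  obtain ⟨x, hx, hcat⟩ := h
  have hlen : StrictMono fun n => ((List.range n).flatMap x).length :=
    strictMono_nat_of_lt_succ fun n => by
      simp [List.range_succ, List.length_pos_iff.2 (ne_nil_of_mem_EWN (hx n))]
  refine Set.infinite_of_injective_forall_mem hlen.injective fun n => ?_
  change WN k ((List.range _).map α)
  rw [← (hcat n).eq_map_range]
  exact WN.flatMap fun i _ => wn_of_mem_EWN (hx i)

theorem wnomega_of_infinite_wn_prefixes (h : {n : ℕ | WN k ((List.range n).map α)}.Infinite) :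
    WNomega k α := by
  have hnonneg : ∀ m, 0 ≤ height k α m := fun m =>
    let ⟨_, hn, hmn⟩ := h.exists_gt m
    height_nonneg_of_wn hn hmn.le
  have hzeros : {n | height k α n = 0}.Infinite := h.mono fun n hn => hn.isDyck.1
  set e := Nat.nth fun n => height k α n = 0
  have he := Nat.nth_strictMono hzeros
  have he0 : e 0 = 0 := Nat.nth_zero_of_zero (p := fun n => height k α n = 0) rfl
  refine ⟨_, fun i => ?_, concats_segments α he0 he.monotone⟩
  have hlt : e i < e (i + 1) := he i.lt_succ_self
  apply mem_EWN_segment (by omega) (Nat.nth_mem_of_infinite hzeros i)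
  · rw [Nat.add_sub_cancel' hlt.le]; exact Nat.nth_mem_of_infinite hzeros (i + 1)
  · exact fun j _ => hnonneg _
  · intro j hj0 hjd hzero
    have : e i + j ≤ e i := Nat.le_nth_of_lt_nth_succ (show e i + j < e (i + 1) by omega) hzero
    omega

end Omega

theorem wnomega_iff_infinitely_many_wellnested_prefixes
    {A : Type} (k : A → Kind) (α : ℕ → A) :
    WNomega k α ↔ {n : ℕ | WN k ((List.range n).map α)}.Infinite :=
  ⟨WNomega.infinite_wn_prefixes, wnomega_of_infinite_wn_prefixes⟩
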